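/- Let (Q,d) be a Hadamard space, i.e., a nonempty complete metric space such that for all q,p ∈ Q there exists m ∈ Q with d(y,m)² ≤ (1/2)d(y,q)² + (1/2)d(y,p)² - (1/4)d(q,p)² for all y ∈ Q. Let Y be a Q-valued random variable with finite second moments and let b ∈ Q be a Fréchet mean of Y. Then for every q ∈ Q: d(q,b)² ≤ E[d(Y,q)² - d(Y,b)²] (the variance inequality with constant 1). -/
import Mathlib


open MeasureTheory ProbabilityTheory

theorem stmt8 {Q : Type*} [MetricSpace Q] [Nonempty Q] [CompleteSpace Q]
    (hHadamard : ∀ q p : Q, ∃ m : Q, ∀ y : Q,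
      dist y m ^ 2 ≤ (1/2) * dist y q ^ 2 + (1/2) * dist y p ^ 2 - (1/4) * dist q p ^ 2)
    {Ω : Type*} [MeasureSpace Ω] [IsProbabilityMeasure (ℙ : Measure Ω)]
    (Y : Ω → Q)
    (hint : ∀ q : Q, Integrable (fun ω => dist (Y ω) q ^ 2))
    (b : Q) (hb : ∀ q : Q, (∫ ω, dist (Y ω) b ^ 2) ≤ ∫ ω, dist (Y ω) q ^ 2) :
    ∀ q : Q, dist q b ^ 2 ≤ ∫ ω, (dist (Y ω) q ^ 2 - dist (Y ω) b ^ 2) := by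
  set I : Q → ℝ := fun q => ∫ ω, dist (Y ω) q ^ 2 with hIdef
  have key : ∀ n : ℕ, ∀ q : Q, (1 - (1/2:ℝ)^n) * dist q b ^ 2 ≤ I q - I b := by
    intro n
    induction n with
    | zero => intro q; simpa using sub_nonneg.mpr (hb q)
    | succ n ih =>
      intro q
      obtain ⟨m, hm⟩ := hHadamard q b
      -- d(q,m) ≤ ½ d(q,b)
      have hqm : dist q m ^ 2 ≤ (1/4) * dist q b ^ 2 := by
        have := hm q
        simp only [dist_self] at this
        nlinarith [this]
      have hqm' : dist q m ≤ (1/2) * dist q b := by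
        nlinarith [dist_nonneg (x := q) (y := m), dist_nonneg (x := q) (y := b)]
      have hmb : (1/4) * dist q b ^ 2 ≤ dist m b ^ 2 := by
        have htri := dist_triangle q m b
        nlinarith [dist_nonneg (x := m) (y := b), dist_nonneg (x := q) (y := b)]
      -- integral inequality
      have hintc : Integrable (fun ω =>
          (1/2) * dist (Y ω) q ^ 2 + (1/2) * dist (Y ω) b ^ 2 - (1/4) * dist q b ^ 2) := by
        exact (((hint q).const_mul _).add ((hint b).const_mul _)).sub (integrable_const _)
      have hIm : I m ≤ (1/2) * I q + (1/2) * I b - (1/4) * dist q b ^ 2 := by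
        have h1 : I m ≤ ∫ ω, ((1/2) * dist (Y ω) q ^ 2 + (1/2) * dist (Y ω) b ^ 2
            - (1/4) * dist q b ^ 2) :=
          integral_mono (hint m) hintc (fun ω => hm (Y ω))
        have h2 : (∫ ω, ((1/2) * dist (Y ω) q ^ 2 + (1/2) * dist (Y ω) b ^ 2
            - (1/4) * dist q b ^ 2)) = (1/2) * I q + (1/2) * I b - (1/4) * dist q b ^ 2 := by
          have e1 : (∫ ω, ((fun ω => (1/2) * dist (Y ω) q ^ 2 + (1/2) * dist (Y ω) b ^ 2) ω
              - (fun _ : Ω => (1/4) * dist q b ^ 2) ω))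
              = (∫ ω, ((1/2) * dist (Y ω) q ^ 2 + (1/2) * dist (Y ω) b ^ 2))
              - ∫ _ : Ω, (1/4) * dist q b ^ 2 :=
            integral_sub (((hint q).const_mul _).add ((hint b).const_mul _)) (integrable_const _)
          have e2 : (∫ ω, ((fun ω => (1/2) * dist (Y ω) q ^ 2) ω
              + (fun ω => (1/2) * dist (Y ω) b ^ 2) ω))
              = (∫ ω, (1/2) * dist (Y ω) q ^ 2) + ∫ ω, (1/2) * dist (Y ω) b ^ 2 :=
            integral_add ((hint q).const_mul _) ((hint b).const_mul _)
          have e3 : (∫ ω, (1/2) * dist (Y ω) q ^ 2) = (1/2) * I q :=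
            integral_const_mul _ _
          have e4 : (∫ ω, (1/2) * dist (Y ω) b ^ 2) = (1/2) * I b :=
            integral_const_mul _ _
          have e5 : (∫ _ : Ω, (1/4) * dist q b ^ 2) = (1/4) * dist q b ^ 2 := by
            simp
          simp only [] at e1 e2
          rw [e1, e2, e3, e4, e5]
        linarith [h1, h2.le, h2.ge]
      have ihm := ih m
      have hpow : (0:ℝ) ≤ (1/2:ℝ)^n := by positivity
      have hpow1 : ((1:ℝ)/2)^n ≤ 1 := pow_le_one₀ (by norm_num) (by norm_num)
      have hmul : (1 - (1/2:ℝ)^n) * ((1/4) * dist q b ^ 2) ≤ (1 - (1/2:ℝ)^n) * dist m b ^ 2 :=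
        mul_le_mul_of_nonneg_left hmb (by linarith)
      have hps : ((1:ℝ)/2)^(n+1) = (1/2) * (1/2:ℝ)^n := by ring
      nlinarith [hmul, ihm, hIm]
  intro q
  have hlim : Filter.Tendsto (fun n : ℕ => (1 - (1/2:ℝ)^n) * dist q b ^ 2)
      Filter.atTop (nhds (dist q b ^ 2)) := by
    have h1 : Filter.Tendsto (fun n : ℕ => ((1:ℝ)/2)^n) Filter.atTop (nhds 0) :=
      tendsto_pow_atTop_nhds_zero_of_lt_one (by norm_num) (by norm_num)
    have := ((tendsto_const_nhds (x := (1:ℝ)) (f := Filter.atTop (α := ℕ))).sub h1).mul_const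
      (dist q b ^ 2)
    simpa using this
  have hle : dist q b ^ 2 ≤ I q - I b :=
    le_of_tendsto' hlim (fun n => key n q)
  have heq : I q - I b = ∫ ω, (dist (Y ω) q ^ 2 - dist (Y ω) b ^ 2) :=
    (integral_sub (hint q) (hint b)).symm
  linarith [hle, heq.le, heq.ge]
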